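/- Suppose A ≡ B via covers H ⊆ Hom(A,B) and G ⊆ Hom(B,A), and k_B is a maximal atom of B. Then there exist h ∈ H and a maximal atom k_A of A with h(k_A)=k_B, and moreover the composite q_{k_B}∘h∘m_{k_A}: C^A_{k_A} → C^B_{k_B} is an isomorphism. -/
import Mathlib


/-- An atom (fact): relation name together with a tuple of values. -/
abbrev Atom : Type := ℕ × List ℕ

/-- A (finite) instance: a finite set of atoms. -/
@[ext] structure Inst where
  atoms : Finset Atom
deriving DecidableEq

/-- The active domain of an instance. -/
def adom (A : Inst) : Set ℕ := {x | ∃ a ∈ A.atoms, x ∈ a.2}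

/-- The action of a map on values extended to atoms. -/
def mapAtom (h : ℕ → ℕ) (a : Atom) : Atom := (a.1, a.2.map h)

/-- A homomorphism between instances, fixing the constants `Cst`. -/
structure Hom (Cst : Set ℕ) (A B : Inst) where
  toFun : ℕ → ℕ
  fixes : ∀ c ∈ Cst, toFun c = c
  maps : ∀ a ∈ A.atoms, mapAtom toFun a ∈ B.atoms

/-- Composition of homomorphisms. -/
def Hom.comp {Cst : Set ℕ} {A B C : Inst} (g : Hom Cst B C) (f : Hom Cst A B) :
    Hom Cst A C where
  toFun := g.toFun ∘ f.toFun
  fixes := by intro c hc; simp [f.fixes c hc, g.fixes c hc]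
  maps := by
    intro a ha
    have := g.maps _ (f.maps a ha)
    simpa [mapAtom, List.map_map] using this

/-- A homomorphism is an isomorphism if it has a two-sided inverse on active domains. -/
def IsIso {Cst : Set ℕ} {A B : Inst} (h : Hom Cst A B) : Prop :=
  ∃ g : Hom Cst B A,
    (∀ x ∈ adom A, g.toFun (h.toFun x) = x) ∧ (∀ x ∈ adom B, h.toFun (g.toFun x) = x)

/-- Two instances are isomorphic. -/
def Isomorphic (Cst : Set ℕ) (A B : Inst) : Prop := ∃ h : Hom Cst A B, IsIso h

/-- A set of homomorphisms is a cover if every atom of the codomain is hit. -/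
def IsCover {Cst : Set ℕ} {A B : Inst} (H : Set (Hom Cst A B)) : Prop :=
  ∀ b ∈ B.atoms, ∃ h ∈ H, ∃ a ∈ A.atoms, mapAtom h.toFun a = b

/-- PCWA-equivalence: covers exist in both directions. -/
def PCWAEquiv (Cst : Set ℕ) (A B : Inst) : Prop :=
  (∃ H : Set (Hom Cst A B), IsCover H) ∧ (∃ G : Set (Hom Cst B A), IsCover G)

/-- `A` is a PCWA-core if every self-cover contains an isomorphism. -/
def PCWACore (Cst : Set ℕ) (A : Inst) : Prop :=
  ∀ H : Set (Hom Cst A A), IsCover H → ∃ h ∈ H, IsIso h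

/-- `C` is a reflective subinstance of `B` (up to isomorphism):
an injective homomorphism `m : C → B` with a retraction `q : B → C`. -/
def ReflSub (Cst : Set ℕ) (C B : Inst) : Prop :=
  ∃ m : Hom Cst C B, ∃ q : Hom Cst B C,
    Set.InjOn m.toFun (adom C) ∧ ∀ x ∈ adom C, q.toFun (m.toFun x) = x

/-- `C` is a strict reflective subinstance of `A`: an actual subinstance
together with a retraction that is the identity on `C`'s domain. -/
def StrictReflSub (Cst : Set ℕ) (C A : Inst) : Prop :=
  C.atoms ⊆ A.atoms ∧ ∃ q : Hom Cst A C, ∀ x ∈ adom C, q.toFun x = x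

/-- `k` is an endomorphism-maximal atom of `A`. -/
def MaxAtom (Cst : Set ℕ) (A : Inst) (k : Atom) : Prop :=
  k ∈ A.atoms ∧ ∀ k' ∈ A.atoms, ∀ f : Hom Cst A A, mapAtom f.toFun k' = k →
    ∃ g : Hom Cst A A, mapAtom g.toFun k = k'

/-- `C` is the core of `A` with respect to the atom `k`:
the least strict reflective subinstance of `A` containing `k`. -/
def IsCoreAt (Cst : Set ℕ) (A : Inst) (k : Atom) (C : Inst) : Prop :=
  StrictReflSub Cst C A ∧ k ∈ C.atoms ∧
    ∀ D : Inst, StrictReflSub Cst D A → k ∈ D.atoms → StrictReflSub Cst C D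

/-- The inclusion homomorphism of a subinstance. -/
def inclHom (Cst : Set ℕ) {C A : Inst} (hsub : C.atoms ⊆ A.atoms) : Hom Cst C A where
  toFun := id
  fixes := fun _ _ => rfl
  maps := by intro a ha; simpa [mapAtom] using hsub ha

/-- A strongly surjective homomorphism: every atom of the codomain is the image of an atom. -/
def StrongSurj {Cst : Set ℕ} {A B : Inst} (h : Hom Cst A B) : Prop :=
  ∀ b ∈ B.atoms, ∃ a ∈ A.atoms, mapAtom h.toFun a = b

/-- The image instance of `A` under the value map `f`. -/
def imageInst (f : ℕ → ℕ) (A : Inst) : Inst := ⟨A.atoms.image (mapAtom f)⟩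

/-- The union of a finite family of instances. -/
def unionInst (F : Finset Inst) : Inst := ⟨F.sup Inst.atoms⟩

/-- The members of `F` share no nulls: any value in two distinct members is a constant. -/
def nullsDisjoint (Cst : Set ℕ) (F : Finset Inst) : Prop :=
  ∀ E ∈ F, ∀ E' ∈ F, E ≠ E' → adom E ∩ adom E' ⊆ Cst

/-- `F` is the multicore of `A`: each member is (isomorphic to) a core of `A`
at some maximal atom, every core at a maximal atom is a reflective subinstance
of some member, and no member is a reflective subinstance of another. -/
def IsMulticore (Cst : Set ℕ) (A : Inst) (F : Finset Inst) : Prop :=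
  (∀ E ∈ F, ∃ k C, MaxAtom Cst A k ∧ IsCoreAt Cst A k C ∧ Isomorphic Cst E C) ∧
  (∀ k C, MaxAtom Cst A k → IsCoreAt Cst A k C → ∃ E ∈ F, ReflSub Cst C E) ∧
  (∀ E ∈ F, ∀ E' ∈ F, ReflSub Cst E E' → E = E')


section AuxProof

variable {Cst : Set ℕ}

lemma mapAtom_hom_comp {A B C : Inst} (g : Hom Cst B C) (f : Hom Cst A B) (a : Atom) :
    mapAtom (g.comp f).toFun a = mapAtom g.toFun (mapAtom f.toFun a) := by
  simp [Hom.comp, mapAtom]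

lemma adom_map {A B : Inst} (f : Hom Cst A B) {x : ℕ} (hx : x ∈ adom A) :
    f.toFun x ∈ adom B := by
  obtain ⟨a, ha, hxa⟩ := hx
  exact ⟨mapAtom f.toFun a, f.maps a ha, List.mem_map.mpr ⟨x, hxa, rfl⟩⟩

lemma mapAtom_eq_of_fix {f : ℕ → ℕ} {k : Atom} (h : ∀ x ∈ k.2, f x = x) :
    mapAtom f k = k := by
  cases k with
  | mk r l =>
    simp only [mapAtom]
    exact Prod.ext rfl (by simpa using (List.map_congr_left h).trans (List.map_id l))

lemma fix_of_mapAtom_eq {f : ℕ → ℕ} {k : Atom} (h : mapAtom f k = k) :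
    ∀ x ∈ k.2, f x = x := by
  have hmap : k.2.map f = k.2 := congrArg Prod.snd h
  intro x hx
  revert hmap
  generalize k.2 = l at hx ⊢
  induction l with
  | nil => simp at hx
  | cons a l ih =>
    intro hmap
    simp only [List.map_cons, List.cons.injEq] at hmap
    rcases List.mem_cons.mp hx with rfl | hx'
    · exact hmap.1
    · exact ih hx' hmap.2

lemma adom_finite (A : Inst) : (adom A).Finite := by
  have hsub : adom A ⊆ ↑(A.atoms.biUnion fun a => a.2.toFinset) := by
    rintro x ⟨a, ha, hx⟩
    simp only [Finset.coe_biUnion, Set.mem_iUnion, Finset.mem_coe, List.mem_toFinset]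
    exact ⟨a, ha, hx⟩
  exact (Finset.finite_toSet _).subset hsub

def idHom (Cst : Set ℕ) (A : Inst) : Hom Cst A A where
  toFun := id
  fixes := fun _ _ => rfl
  maps := by intro a ha; simpa [mapAtom] using ha

def powHom {A : Inst} (θ : Hom Cst A A) : ℕ → Hom Cst A A
  | 0 => idHom Cst A
  | n + 1 => θ.comp (powHom θ n)

lemma powHom_toFun {A : Inst} (θ : Hom Cst A A) (n : ℕ) :
    (powHom θ n).toFun = θ.toFun^[n] := by
  induction n with
  | zero => rfl
  | succ n ih =>
    show θ.toFun ∘ (powHom θ n).toFun = θ.toFun^[n + 1]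
    rw [ih, Function.iterate_succ']

lemma exists_idem_iterate {S : Set ℕ} (hS : S.Finite) {f : ℕ → ℕ}
    (hf : ∀ x ∈ S, f x ∈ S) :
    ∃ n, 1 ≤ n ∧ ∀ x ∈ S, f^[n] (f^[n] x) = f^[n] x := by
  have hiter : ∀ i, ∀ x ∈ S, f^[i] x ∈ S := by
    intro i
    induction i with
    | zero => simp
    | succ i ih =>
      intro x hx
      rw [Function.iterate_succ_apply]
      exact ih _ (hf x hx)
  haveI := hS.to_subtype
  obtain ⟨i, j, hij, hFij⟩ := Finite.exists_ne_map_eq_of_infinite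
    (fun (i : ℕ) => (fun x : S => (⟨f^[i] x.1, hiter i _ x.2⟩ : S)))
  have heq : ∀ i j, i < j → ((fun x : S => (⟨f^[i] x.1, hiter i _ x.2⟩ : S)) =
      (fun x : S => (⟨f^[j] x.1, hiter j _ x.2⟩ : S))) →
      ∃ n, 1 ≤ n ∧ ∀ x ∈ S, f^[n] (f^[n] x) = f^[n] x := by
    clear hij hFij i j
    intro i j hlt hFij
    have hpt : ∀ x ∈ S, f^[i] x = f^[j] x := by
      intro x hx
      have := congrFun hFij ⟨x, hx⟩
      exact congrArg Subtype.val this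
    set p := j - i with hp
    have hp1 : 1 ≤ p := by omega
    have hstep : ∀ m, i ≤ m → ∀ x ∈ S, f^[m + p] x = f^[m] x := by
      intro m hm x hx
      have h1 : m + p = (m - i) + j := by omega
      have h2 : m = (m - i) + i := by omega
      rw [h1, Function.iterate_add_apply, ← hpt x hx, ← Function.iterate_add_apply, ← h2]
    have hkey : ∀ k m, i ≤ m → ∀ x ∈ S, f^[m + k * p] x = f^[m] x := by
      intro k
      induction k with
      | zero => intro m hm x hx; simp
      | succ k ih =>
        intro m hm x hx
        have h1 : m + (k + 1) * p = (m + p) + k * p := by ring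
        rw [h1, ih (m + p) (by omega) x hx, hstep m hm x hx]
    refine ⟨(i + 1) * p, Nat.mul_pos i.succ_pos hp1, ?_⟩
    intro x hx
    rw [← Function.iterate_add_apply]
    have : (i + 1) * p + (i + 1) * p = (i + 1) * p + (i + 1) * p := rfl
    have := hkey (i + 1) ((i + 1) * p) (by nlinarith) x hx
    simpa [add_comm] using this
  rcases hij.lt_or_gt with h | h
  · exact heq i j h hFij
  · exact heq j i h hFij.symm

/-- Any endomorphism of a core at `k` fixing `k` is an isomorphism. -/
lemma core_endo_iso {A : Inst} {k : Atom} {C : Inst}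
    (hC : IsCoreAt Cst A k C) (θ : Hom Cst C C) (hθ : mapAtom θ.toFun k = k) :
    IsIso θ := by
  obtain ⟨⟨hsub, qA, hqA⟩, hkC, hmin⟩ := hC
  have hfin : (adom C).Finite := adom_finite C
  obtain ⟨n, hn1, hidem⟩ := exists_idem_iterate hfin (fun x hx => adom_map θ hx)
  set r := powHom θ n with hr
  have hrfun : r.toFun = θ.toFun^[n] := powHom_toFun θ n
  have hθk : ∀ x ∈ k.2, θ.toFun x = x := fix_of_mapAtom_eq hθ
  have hrk : ∀ x ∈ k.2, r.toFun x = x := by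
    intro x hx
    rw [hrfun]
    exact Function.iterate_fixed (hθk x hx) n
  have hrkatom : mapAtom r.toFun k = k := mapAtom_eq_of_fix hrk
  set D : Inst := imageInst r.toFun C with hD
  have hDmem : ∀ {a : Atom}, a ∈ D.atoms ↔ ∃ a' ∈ C.atoms, mapAtom r.toFun a' = a := by
    intro a
    simp [hD, imageInst]
  have hDC : D.atoms ⊆ C.atoms := by
    intro a ha
    obtain ⟨a', ha', rfl⟩ := hDmem.mp ha
    exact r.maps a' ha'
  have hrfix : ∀ x ∈ adom D, r.toFun x = x := by
    rintro x ⟨a, ha, hxa⟩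
    obtain ⟨a', ha', rfl⟩ := hDmem.mp ha
    obtain ⟨y, hy, rfl⟩ := List.mem_map.mp hxa
    rw [hrfun]
    exact hidem y ⟨a', ha', hy⟩
  have hDA : StrictReflSub Cst D A := by
    refine ⟨hDC.trans hsub, ?_⟩
    refine ⟨{ toFun := r.toFun ∘ qA.toFun,
              fixes := by intro c hc; simp [qA.fixes c hc, r.fixes c hc],
              maps := ?_ }, ?_⟩
    · intro a ha
      have h1 := qA.maps a ha
      have h2 : mapAtom r.toFun (mapAtom qA.toFun a) ∈ D.atoms :=
        hDmem.mpr ⟨_, h1, rfl⟩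
      simpa [mapAtom, List.map_map] using h2
    · intro x hx
      have hxC : x ∈ adom C := by
        obtain ⟨a, ha, hxa⟩ := hx
        exact ⟨a, hDC ha, hxa⟩
      show r.toFun (qA.toFun x) = x
      rw [hqA x hxC]
      exact hrfix x hx
  have hkD : k ∈ D.atoms := hDmem.mpr ⟨k, hkC, hrkatom⟩
  obtain ⟨hCD, -⟩ := hmin D hDA hkD
  have hrid : ∀ x ∈ adom C, r.toFun x = x := by
    rintro x ⟨a, ha, hxa⟩
    exact hrfix x ⟨a, hCD ha, hxa⟩
  obtain ⟨n', rfl⟩ : ∃ n', n = n' + 1 := ⟨n - 1, by omega⟩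
  refine ⟨powHom θ n', ?_, ?_⟩
  · intro x hx
    have : (powHom θ n').toFun (θ.toFun x) = θ.toFun^[n' + 1] x := by
      rw [powHom_toFun, ← Function.iterate_succ_apply]
    rw [this, ← hrfun]
    exact hrid x hx
  · intro x hx
    have : θ.toFun ((powHom θ n').toFun x) = θ.toFun^[n' + 1] x := by
      rw [powHom_toFun]
      exact (Function.iterate_succ_apply' _ _ _).symm
    rw [this, ← hrfun]
    exact hrid x hx

end AuxProof

/-- Maximal atoms and their cores are preserved by PCWA-equivalence. -/
theorem cores_at_maximal_preserved (Cst : Set ℕ) (A B : Inst)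
    (H : Set (Hom Cst A B)) (G : Set (Hom Cst B A))
    (hH : IsCover H) (hG : IsCover G)
    (kB : Atom) (hkB : MaxAtom Cst B kB) :
    ∃ h ∈ H, ∃ kA : Atom, MaxAtom Cst A kA ∧ mapAtom h.toFun kA = kB ∧
      ∀ (CA CB : Inst) (hCA : IsCoreAt Cst A kA CA),
        IsCoreAt Cst B kB CB →
        ∀ qB : Hom Cst B CB, (∀ x ∈ adom CB, qB.toFun x = x) →
          IsIso (qB.comp (h.comp (inclHom Cst hCA.1.1))) := by
  obtain ⟨h, hhH, a, haA, hha⟩ := hH kB hkB.1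
  obtain ⟨g, hgG, b, hbB, hgb⟩ := hG a haA
  have hv : mapAtom (h.comp g).toFun b = kB := by
    rw [mapAtom_hom_comp, hgb, hha]
  obtain ⟨w, hw⟩ := hkB.2 b hbB (h.comp g) hv
  set t := g.comp w with ht
  have hta : mapAtom t.toFun kB = a := by
    rw [ht, mapAtom_hom_comp, hw, hgb]
  have hmax : MaxAtom Cst A a := by
    refine ⟨haA, ?_⟩
    intro k' hk' f hf
    obtain ⟨g₂, hg₂G, b₂, hb₂, hgb₂⟩ := hG k' hk'
    have hv2 : mapAtom ((h.comp f).comp g₂).toFun b₂ = kB := by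
      rw [mapAtom_hom_comp, mapAtom_hom_comp, hgb₂, hf, hha]
    obtain ⟨w₂, hw₂⟩ := hkB.2 b₂ hb₂ _ hv2
    refine ⟨(g₂.comp w₂).comp h, ?_⟩
    rw [mapAtom_hom_comp, mapAtom_hom_comp, hha, hw₂, hgb₂]
  refine ⟨h, hhH, a, hmax, hha, ?_⟩
  intro CA CB hCA hCB qB hqB
  obtain ⟨qA, hqA⟩ := hCA.1.2
  set mA := inclHom Cst hCA.1.1 with hmA
  set mB := inclHom Cst hCB.1.1 with hmB
  set φ := qB.comp (h.comp mA) with hφ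
  set ψ := qA.comp (t.comp mB) with hψ
  have hmAid : ∀ x : Atom, mapAtom mA.toFun x = x := by
    intro x; exact mapAtom_eq_of_fix (fun y _ => rfl)
  have hmBid : ∀ x : Atom, mapAtom mB.toFun x = x := by
    intro x; exact mapAtom_eq_of_fix (fun y _ => rfl)
  have hφkA : mapAtom φ.toFun a = kB := by
    rw [hφ, mapAtom_hom_comp, mapAtom_hom_comp, hmAid, hha]
    exact mapAtom_eq_of_fix (fun x hx => hqB x ⟨kB, hCB.2.1, hx⟩)
  have hψkB : mapAtom ψ.toFun kB = a := by
    rw [hψ, mapAtom_hom_comp, mapAtom_hom_comp, hmBid, hta]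
    exact mapAtom_eq_of_fix (fun x hx => hqA x ⟨a, hCA.2.1, hx⟩)
  have hα : mapAtom (ψ.comp φ).toFun a = a := by
    rw [mapAtom_hom_comp, hφkA, hψkB]
  have hβ : mapAtom (φ.comp ψ).toFun kB = kB := by
    rw [mapAtom_hom_comp, hψkB, hφkA]
  obtain ⟨α', hα1, hα2⟩ := core_endo_iso hCA (ψ.comp φ) hα
  obtain ⟨β', hβ1, hβ2⟩ := core_endo_iso hCB (φ.comp ψ) hβ
  refine ⟨α'.comp ψ, ?_, ?_⟩
  · intro x hx
    show α'.toFun (ψ.toFun (φ.toFun x)) = x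
    exact hα1 x hx
  · intro y hy
    show φ.toFun (α'.toFun (ψ.toFun y)) = y
    have hz : β'.toFun y ∈ adom CB := adom_map β' hy
    have hzCA : ψ.toFun (β'.toFun y) ∈ adom CA := adom_map ψ hz
    have hyz : φ.toFun (ψ.toFun (β'.toFun y)) = y := hβ2 y hy
    calc φ.toFun (α'.toFun (ψ.toFun y))
        = φ.toFun (α'.toFun (ψ.toFun (φ.toFun (ψ.toFun (β'.toFun y))))) := by rw [hyz]
      _ = φ.toFun (ψ.toFun (β'.toFun y)) := by
          rw [show ψ.toFun (φ.toFun (ψ.toFun (β'.toFun y))) =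
              (ψ.comp φ).toFun (ψ.toFun (β'.toFun y)) from rfl,
            hα1 _ hzCA]
      _ = y := hyz
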